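/- arXiv:1403.1494 — 4 statements merged into one kernel-verified Lean document; each statement's English description precedes it below -/
import Mathlib

section
/- For the path graph P_n on n ≥ 2 vertices, the performance measure ρ_ss(P_n) = (1/2)∑_{i=2}^n λ_i^{-1} equals (n^2-1)/12. -/
open Matrix SimpleGraph Finset

/-- Performance measure: half the sum of reciprocals of the Laplacian eigenvalues
(the zero eigenvalue contributes `0⁻¹ = 0`). -/
noncomputable def rho {n : ℕ} (G : SimpleGraph (Fin n)) [DecidableRel G.Adj] : ℝ :=
  (1/2) * ∑ i, ((G.posSemidef_lapMatrix ℝ).1.eigenvalues i)⁻¹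

noncomputable instance {n : ℕ} : DecidableRel (pathGraph n).Adj := Classical.decRel _

/-!
The sum `∑ λᵢ⁻¹` over the Laplacian spectrum (with `0⁻¹ = 0`) is the trace of the pseudoinverse
of `L`. Writing `C = 1 - J/n` for the centering matrix, `C L = L`, and any `M` with `L M = C` and
`M C = M` has trace `∑ λᵢ⁻¹`, as one reads off in an eigenbasis of `L`. For the path
`0 - 1 - ⋯ - (n-1)` one may take `M = X C` with `X i j = min i j`: the `j`-th column of `X` is the
potential of a unit current entering at `j` and leaving at `0`, so `L X = 1 - e₀ 𝟙ᵀ`. Hence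
`2 ρ = trace (X C) = ∑ i - (1/n) ∑ min i j = n(n-1)/2 - (n-1)(2n-1)/6 = (n² - 1)/6`.
-/

namespace Matrix

variable {ι : Type*} [Fintype ι] [DecidableEq ι]

theorem trace_eq_sum_inv_of_diagonal {K : Type*} [Field K] [StarRing K] {d : ι → K}
    {P M : Matrix ι ι K} (hP : P.IsHermitian) (hPD : P * diagonal d = diagonal d)
    (hDM : diagonal d * M = P) (hMP : M * P = M) : M.trace = ∑ i, (d i)⁻¹ := by
  refine Finset.sum_congr rfl fun i _ => ?_
  have hDM_apply (j : ι) : d i * M i j = P i j := by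
    simpa [diagonal_mul] using congr_fun₂ hDM i j
  by_cases hdi : d i = 0
  -- a zero eigenvalue kills row `i` of `P`, hence column `i`, hence `M i i = (M * P) i i`
  · have hcol (j : ι) : P j i = 0 := by
      rw [← hP.apply j i, ← hDM_apply, hdi, zero_mul, star_zero]
    simpa [mul_apply, hcol, hdi, eq_comm] using congr_fun₂ hMP i i
  · have hPii : P i i = 1 := by
      simpa [mul_diagonal, hdi] using congr_fun₂ hPD i i
    exact eq_inv_of_mul_eq_one_left (by rw [diag_apply, mul_comm, hDM_apply, hPii])

theorem IsHermitian.trace_eq_sum_inv_eigenvalues {𝕜 : Type*} [RCLike 𝕜] {A P M : Matrix ι ι 𝕜}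
    (hA : A.IsHermitian) (hP : P.IsHermitian) (hPA : P * A = A) (hAM : A * M = P)
    (hMP : M * P = M) : M.trace = ∑ i, ((hA.eigenvalues i : 𝕜))⁻¹ := by
  set φ := Unitary.conjStarAlgAut 𝕜 (Matrix ι ι 𝕜) (star hA.eigenvectorUnitary)
  have hφA : φ A = diagonal fun i => (hA.eigenvalues i : 𝕜) :=
    hA.conjStarAlgAut_star_eigenvectorUnitary
  have htrace : (φ M).trace = M.trace := by
    rw [Unitary.conjStarAlgAut_star_apply, trace_mul_cycle,
      Unitary.mul_star_self_of_mem hA.eigenvectorUnitary.2, one_mul]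
  rw [← htrace]
  refine trace_eq_sum_inv_of_diagonal (P := φ P) ?_ ?_ ?_ ?_
  · simpa [IsHermitian, ← star_eq_conjTranspose] using (map_star φ P).symm.trans (congrArg φ hP)
  · rw [← hφA, ← map_mul, hPA]
  · rw [← hφA, ← map_mul, hAM]
  · rw [← map_mul, hMP]

variable {K : Type*} [Field K]

variable (ι K) in
def centeringMatrix : Matrix ι ι K := 1 - (Fintype.card ι : K)⁻¹ • of fun _ _ => 1

theorem centeringMatrix_isSymm : (centeringMatrix ι K).IsSymm := by
  simp only [centeringMatrix, IsSymm, transpose_sub, transpose_one, transpose_smul]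
  rfl

theorem mul_centeringMatrix_apply (A : Matrix ι ι K) (i j : ι) :
    (A * centeringMatrix ι K) i j = A i j - (Fintype.card ι : K)⁻¹ * ∑ k, A i k := by
  rw [centeringMatrix, Matrix.mul_sub, Matrix.mul_one, Matrix.mul_smul]
  simp [mul_apply]

theorem mul_centeringMatrix_of_sum_eq_zero {A : Matrix ι ι K} (hA : ∀ i, ∑ k, A i k = 0) :
    A * centeringMatrix ι K = A := by
  ext i j
  rw [mul_centeringMatrix_apply, hA, mul_zero, sub_zero]

theorem centeringMatrix_mul_of_isSymm {A : Matrix ι ι K} (hA : A.IsSymm)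
    (h : ∀ i, ∑ k, A i k = 0) : centeringMatrix ι K * A = A := by
  apply transpose_injective
  rw [transpose_mul, hA.eq, centeringMatrix_isSymm.eq, mul_centeringMatrix_of_sum_eq_zero h]

variable [CharZero K] [Nonempty ι]

theorem of_mul_centeringMatrix (b : ι → K) : of (fun i _ => b i) * centeringMatrix ι K = 0 := by
  ext i j
  simp [mul_centeringMatrix_apply]

theorem centeringMatrix_mul_self :
    centeringMatrix ι K * centeringMatrix ι K = centeringMatrix ι K := by
  refine mul_centeringMatrix_of_sum_eq_zero fun i => ?_
  simp [centeringMatrix, Finset.sum_sub_distrib, one_apply]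

end Matrix

theorem SimpleGraph.lapMatrix_mulVec_apply_eq_sum {V R : Type*} [Fintype V] [DecidableEq V]
    (G : SimpleGraph V) [DecidableRel G.Adj] [NonAssocRing R] (x : V → R) (i : V) :
    (G.lapMatrix R *ᵥ x) i = ∑ j, if G.Adj i j then x i - x j else 0 := by
  simp [lapMatrix_mulVec_apply, degree_eq_sum_if_adj, ← Finset.sum_filter,
    Finset.sum_sub_distrib, neighborFinset_eq_filter]

theorem SimpleGraph.sum_lapMatrix_row_eq_zero {V R : Type*} [Fintype V] [DecidableEq V]
    (G : SimpleGraph V) [DecidableRel G.Adj] [NonAssocRing R] (i : V) :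
    ∑ j, G.lapMatrix R i j = 0 := by
  simpa [mulVec, dotProduct] using congr_fun (G.lapMatrix_mulVec_const_eq_zero (R := R)) i

theorem natCast_min_eq_sum_range {R : Type*} [AddCommMonoidWithOne R] (a b : ℕ) :
    ((min a b : ℕ) : R) = ∑ k ∈ range b, if k < a then 1 else 0 := by
  induction b with
  | zero => simp
  | succ b ih =>
    have hmin : min a (b + 1) = min a b + if b < a then 1 else 0 := by split_ifs <;> omega
    rw [sum_range_succ, ← ih, hmin, Nat.cast_add, Nat.cast_ite, Nat.cast_one, Nat.cast_zero]

theorem sum_range_natCast (m : ℕ) : ∑ i ∈ range m, (i : ℝ) = m * (m - 1) / 2 := by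
  induction m with
  | zero => simp
  | succ m ih => rw [sum_range_succ, ih]; push_cast; ring

theorem sum_range_sum_range_natCast_min (m : ℕ) :
    ∑ i ∈ range m, ∑ j ∈ range m, ((min i j : ℕ) : ℝ) = m * (m - 1) * (2 * m - 1) / 6 := by
  induction m with
  | zero => simp
  | succ m ih =>
    have hlast (i : ℕ) (hi : i ∈ range m) : ((min i m : ℕ) : ℝ) = i := by
      rw [min_eq_left (mem_range.mp hi).le]
    have hlast' (j : ℕ) (hj : j ∈ range m) : ((min m j : ℕ) : ℝ) = j := by
      rw [min_eq_right (mem_range.mp hj).le]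
    simp only [sum_range_succ, sum_add_distrib, ih, sum_congr rfl hlast, sum_congr rfl hlast',
      sum_range_natCast, min_self]
    push_cast
    ring

section PathGraph

variable {n : ℕ}

theorem pathGraph_lapMatrix_mulVec_indicator_gt {k : ℕ} (hk : k + 1 < n) :
    (pathGraph n).lapMatrix ℝ *ᵥ (fun i => if k < i.val then 1 else 0)
      = fun i => (if i.val = k + 1 then 1 else 0) - (if i.val = k then 1 else 0) := by
  ext i
  have hsummand (j : Fin n) :
      (if (pathGraph n).Adj i j then
        ((if k < i.val then 1 else 0) - (if k < j.val then 1 else 0) : ℝ) else 0)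
        = (if j = ⟨k, by omega⟩ then (if i.val = k + 1 then 1 else 0) else 0)
          - (if j = ⟨k + 1, hk⟩ then (if i.val = k then 1 else 0) else 0) := by
    simp only [pathGraph_adj, Fin.ext_iff]
    split_ifs <;> (try norm_num) <;> omega
  rw [lapMatrix_mulVec_apply_eq_sum, Finset.sum_congr rfl fun j _ => hsummand j,
    Finset.sum_sub_distrib, Finset.sum_ite_eq', Finset.sum_ite_eq']
  simp

theorem pathGraph_lapMatrix_mul_min :
    (pathGraph n).lapMatrix ℝ * of (fun i j : Fin n => ((min i.val j.val : ℕ) : ℝ))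
      = 1 - of fun i _ => if i.val = 0 then 1 else 0 := by
  ext i j
  have hcol : (fun l : Fin n => ((min l.val j.val : ℕ) : ℝ))
      = ∑ k ∈ range j.val, fun l : Fin n => if k < l.val then 1 else 0 := by
    ext l
    rw [natCast_min_eq_sum_range, Finset.sum_apply]
  calc _ = ((pathGraph n).lapMatrix ℝ *ᵥ fun l : Fin n => ((min l.val j.val : ℕ) : ℝ)) i := rfl
    _ = ∑ k ∈ range j.val, ((if i.val = k + 1 then 1 else 0) - (if i.val = k then 1 else 0)) := by
      rw [hcol, mulVec_sum, Finset.sum_apply]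
      refine Finset.sum_congr rfl fun k hk => ?_
      rw [pathGraph_lapMatrix_mulVec_indicator_gt (by have := mem_range.mp hk; omega)]
    _ = (if i.val = j.val then 1 else 0) - (if i.val = 0 then 1 else 0) :=
      Finset.sum_range_sub (fun m => if i.val = m then (1 : ℝ) else 0) j.val
    _ = _ := by simp [one_apply, Fin.ext_iff]

theorem trace_min_mul_centeringMatrix (hn : n ≠ 0) :
    (of (fun i j : Fin n => ((min i.val j.val : ℕ) : ℝ)) * centeringMatrix (Fin n) ℝ).trace
      = ((n : ℝ) ^ 2 - 1) / 6 := by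
  simp only [trace, diag_apply, mul_centeringMatrix_apply, of_apply, min_self, Fintype.card_fin,
    sum_sub_distrib, ← mul_sum]
  have hmin : ∑ i : Fin n, ∑ k : Fin n, ((min i.val k.val : ℕ) : ℝ)
      = n * (n - 1) * (2 * n - 1) / 6 := by
    rw [← sum_range_sum_range_natCast_min, ← Fin.sum_univ_eq_sum_range]
    exact sum_congr rfl fun i _ => Fin.sum_univ_eq_sum_range (fun k => ((min i.val k : ℕ) : ℝ)) n
  rw [Fin.sum_univ_eq_sum_range (fun i => ((i : ℕ) : ℝ)), sum_range_natCast, hmin]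
  field_simp
  ring

end PathGraph

/-- For the path graph `P_n` (`n ≥ 2`), `ρ_ss(P_n) = (n^2-1)/12`. -/
theorem stmt2 (n : ℕ) (hn : 2 ≤ n) :
    rho (pathGraph n) = ((n : ℝ) ^ 2 - 1) / 12 := by
  have : NeZero n := ⟨by omega⟩
  set L := (pathGraph n).lapMatrix ℝ
  set X := of fun i j : Fin n => ((min i.val j.val : ℕ) : ℝ)
  set C := centeringMatrix (Fin n) ℝ
  have hCL : C * L = L :=
    centeringMatrix_mul_of_isSymm (isSymm_lapMatrix ℝ _) (sum_lapMatrix_row_eq_zero _)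
  have hLXC : L * (X * C) = C := by
    rw [← Matrix.mul_assoc, pathGraph_lapMatrix_mul_min, Matrix.sub_mul, Matrix.one_mul,
      of_mul_centeringMatrix, sub_zero]
  have hXCC : X * C * C = X * C := by rw [Matrix.mul_assoc, centeringMatrix_mul_self]
  have hC : C.IsHermitian := isHermitian_iff_isSymm.mpr centeringMatrix_isSymm
  have htrace :=
    ((pathGraph n).posSemidef_lapMatrix ℝ).1.trace_eq_sum_inv_eigenvalues hC hCL hLXC hXCC
  simp only [RCLike.ofReal_real_eq_id, id_eq] at htrace
  rw [rho, ← htrace, trace_min_mul_centeringMatrix (by omega)]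
  ring
end

section
/- For every connected simple unweighted graph G on n vertices, the performance measure satisfies ρ_ss(G) ≥ (n-1)/(2n), with equality if and only if G is the complete graph K_n. -/
/-!
The nonzero Laplacian eigenvalues `μ₂, …, μₙ` are `n - 1` in number because `G` is connected, and
they sum to `tr L = 2|E| ≤ n(n - 1)`. Cauchy–Schwarz gives
`(n - 1)² ≤ (∑ μᵢ)(∑ μᵢ⁻¹) ≤ n(n - 1) · 2ρ`, and equality forces `2|E| = n(n - 1)`, i.e. `G = Kₙ`.
Conversely `L(Kₙ)² = n L(Kₙ)`, so every nonzero eigenvalue of `Kₙ` equals `n`.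
-/

open Matrix SimpleGraph Finset

open Polynomial in
theorem Matrix.IsHermitian.eigenvalues_eq_zero_or_eq_of_mul_self_eq_smul {𝕜 n : Type*} [RCLike 𝕜]
    [Fintype n] [DecidableEq n] {A : Matrix n n 𝕜} (hA : A.IsHermitian) {c : ℝ}
    (h : A * A = c • A) (i : n) : hA.eigenvalues i = 0 ∨ hA.eigenvalues i = c := by
  have : Nonempty n := ⟨i⟩
  have hmem := spectrum.subset_polynomial_aeval A (X * X - C c * X)
    ⟨_, hA.eigenvalues_mem_spectrum_real i, rfl⟩
  -- `μ² - cμ` lies in the spectrum of `A² - cA = 0`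
  simp only [aeval_sub, map_mul, aeval_X, h, aeval_C, Algebra.algebraMap_eq_smul_one,
    Algebra.smul_mul_assoc, one_mul, sub_self, spectrum.zero_eq, eval_sub, eval_mul, eval_X,
    eval_C, Set.mem_singleton_iff] at hmem
  rw [← sub_mul, mul_eq_zero, sub_eq_zero] at hmem
  exact hmem.symm

theorem Finset.sq_card_filter_ne_zero_le_sum_mul_sum_inv {ι R : Type*} [Fintype ι] [Semifield R]
    [LinearOrder R] [IsStrictOrderedRing R] [ExistsAddOfLE R] {f : ι → R} (hf : ∀ i, 0 ≤ f i) :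
    (#{i | f i ≠ 0} : R) ^ 2 ≤ (∑ i, f i) * ∑ i, (f i)⁻¹ := by
  classical
  have hinv : ∑ i with f i ≠ 0, (f i)⁻¹ = ∑ i, (f i)⁻¹ :=
    sum_filter_of_ne fun i _ h => by simpa using h
  have := sum_sq_le_sum_mul_sum_of_sq_le_mul {i | f i ≠ 0} (r := 1) (fun i _ => hf i)
    (fun i _ => inv_nonneg.2 (hf i)) fun i hi => by simp [mul_inv_cancel₀ (mem_filter.1 hi).2]
  simpa [sum_filter_ne_zero, hinv] using this

namespace SimpleGraph
variable {V : Type*} [Fintype V] (G : SimpleGraph V) [DecidableRel G.Adj]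

theorem two_mul_card_edgeFinset_le :
    2 * (#G.edgeFinset : ℝ) ≤ Fintype.card V * (Fintype.card V - 1) := by
  have := Nat.cast_le (α := ℝ).2 G.card_edgeFinset_le_card_choose_two
  rw [Nat.cast_choose_two] at this
  linarith

variable [DecidableEq V]

theorem card_edgeFinset_eq_card_choose_two_iff :
    #G.edgeFinset = (Fintype.card V).choose 2 ↔ G = ⊤ := by
  refine ⟨fun h => ?_, ?_⟩
  · rw [← edgeFinset_inj]
    refine eq_of_subset_of_card_le (edgeFinset_mono le_top) ?_
    rw [h, card_edgeFinset_top_eq_card_choose_two]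
  · rintro rfl
    convert card_edgeFinset_top_eq_card_choose_two (V := V)

theorem two_mul_card_edgeFinset_eq_iff :
    2 * (#G.edgeFinset : ℝ) = Fintype.card V * (Fintype.card V - 1) ↔ G = ⊤ := by
  rw [← card_edgeFinset_eq_card_choose_two_iff, ← Nat.cast_inj (R := ℝ), Nat.cast_choose_two]
  constructor <;> intro h <;> linarith

theorem sum_lapMatrix_eigenvalues :
    ∑ i, (G.isHermitian_lapMatrix ℝ).eigenvalues i = 2 * #G.edgeFinset := by
  have := (G.isHermitian_lapMatrix ℝ).trace_eq_sum_eigenvalues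
  simp only [RCLike.ofReal_real_eq_id, id] at this
  rw [← this, lapMatrix, trace_sub, trace_adjMatrix, degMatrix, trace_diagonal, sub_zero]
  exact_mod_cast G.sum_degrees_eq_twice_card_edges

variable {G} in
theorem Connected.card_lapMatrix_eigenvalues_ne_zero (hG : G.Connected) :
    #{i | (G.isHermitian_lapMatrix ℝ).eigenvalues i ≠ 0} = Fintype.card V - 1 := by
  obtain ⟨v⟩ := hG.nonempty
  have hker : Module.finrank ℝ (LinearMap.ker (G.lapMatrix ℝ).toLin') = 1 := by
    rw [← card_connectedComponent_eq_finrank_ker_toLin'_lapMatrix, Fintype.card_eq_one_iff]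
    exact ⟨G.connectedComponentMk v,
      fun c => hG.preconnected.subsingleton_connectedComponent.elim c _⟩
  have := LinearMap.finrank_range_add_finrank_ker (G.lapMatrix ℝ).toLin'
  rw [hker, Module.finrank_fintype_fun_eq_card] at this
  rw [← Fintype.card_subtype, ← (G.isHermitian_lapMatrix ℝ).rank_eq_card_non_zero_eigs, rank]
  exact Nat.eq_sub_of_add_eq this

variable {G} in
theorem Connected.sq_card_sub_one_le_mul_sum_inv_lapMatrix_eigenvalues (hG : G.Connected) :
    ((Fintype.card V : ℝ) - 1) ^ 2 ≤
      2 * #G.edgeFinset * ∑ i, ((G.isHermitian_lapMatrix ℝ).eigenvalues i)⁻¹ := by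
  have := sq_card_filter_ne_zero_le_sum_mul_sum_inv (G.posSemidef_lapMatrix ℝ).eigenvalues_nonneg
  rwa [hG.card_lapMatrix_eigenvalues_ne_zero, sum_lapMatrix_eigenvalues,
    Nat.cast_sub (Fintype.card_pos_iff.2 hG.nonempty), Nat.cast_one] at this

theorem lapMatrix_top {R : Type*} [Ring R] [DecidableRel (⊤ : SimpleGraph V).Adj] :
    (⊤ : SimpleGraph V).lapMatrix R = (Fintype.card V : R) • 1 - of fun _ _ => 1 := by
  have hdeg (v : V) : (⊤ : SimpleGraph V).degree v = Fintype.card V - 1 := by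
    convert complete_graph_degree v
  ext i j
  rcases eq_or_ne i j with rfl | h
  · simp [lapMatrix, degMatrix, hdeg, Nat.cast_sub (Fintype.card_pos_iff.2 ⟨i⟩)]
  · simp [lapMatrix, degMatrix, h]

theorem lapMatrix_top_mul_self {R : Type*} [CommRing R] [DecidableRel (⊤ : SimpleGraph V).Adj] :
    (⊤ : SimpleGraph V).lapMatrix R * (⊤ : SimpleGraph V).lapMatrix R =
      (Fintype.card V : R) • (⊤ : SimpleGraph V).lapMatrix R := by
  set J : Matrix V V R := of fun _ _ => 1
  have hJ : J * J = (Fintype.card V : R) • J := by ext; simp [J, mul_apply]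
  rw [lapMatrix_top, sub_mul, mul_sub, mul_sub, smul_mul_assoc, smul_mul_assoc, one_mul,
    mul_smul_comm, mul_one, hJ, smul_sub, smul_smul, Matrix.one_mul]
  abel

theorem sum_inv_lapMatrix_eigenvalues_top [Nonempty V] [DecidableRel (⊤ : SimpleGraph V).Adj] :
    ∑ i, (((⊤ : SimpleGraph V).isHermitian_lapMatrix ℝ).eigenvalues i)⁻¹ =
      ((Fintype.card V : ℝ) - 1) / Fintype.card V := by
  set μ := ((⊤ : SimpleGraph V).isHermitian_lapMatrix ℝ).eigenvalues
  have hμ (i : V) : (μ i)⁻¹ = if μ i ≠ 0 then (Fintype.card V : ℝ)⁻¹ else 0 := by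
    rcases (isHermitian_lapMatrix ℝ ⊤).eigenvalues_eq_zero_or_eq_of_mul_self_eq_smul
      lapMatrix_top_mul_self i with h | h <;> simp [μ, h]
  rw [sum_congr rfl fun i _ => hμ i, sum_ite, sum_const_zero, add_zero, sum_const,
    connected_top.card_lapMatrix_eigenvalues_ne_zero, nsmul_eq_mul,
    Nat.cast_sub Fintype.card_pos, Nat.cast_one, div_eq_mul_inv]

end SimpleGraph

/-- Every connected graph satisfies `ρ_ss(G) ≥ (n-1)/(2n)`,
with equality iff `G` is the complete graph. -/
theorem stmt3 {n : ℕ} (G : SimpleGraph (Fin n)) [DecidableRel G.Adj] (hG : G.Connected) :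
    ((n : ℝ) - 1) / (2 * n) ≤ rho G ∧
    (rho G = ((n : ℝ) - 1) / (2 * n) ↔ G = ⊤) := by
  have hn : (1 : ℝ) ≤ n := by exact_mod_cast Fin.pos_iff_nonempty.2 hG.nonempty
  have hρ : 0 ≤ rho G :=
    mul_nonneg (by norm_num) (sum_nonneg fun i _ => inv_nonneg.2
      ((G.posSemidef_lapMatrix ℝ).eigenvalues_nonneg i))
  have hCS : ((n : ℝ) - 1) ^ 2 ≤ 2 * #G.edgeFinset * (2 * rho G) := by
    simpa [rho] using hG.sq_card_sub_one_le_mul_sum_inv_lapMatrix_eigenvalues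
  have hm : 2 * (#G.edgeFinset : ℝ) ≤ n * (n - 1) := by simpa using G.two_mul_card_edgeFinset_le
  have hm_top : 2 * (#G.edgeFinset : ℝ) = n * (n - 1) ↔ G = ⊤ := by
    simpa using G.two_mul_card_edgeFinset_eq_iff
  refine ⟨?_, fun h => hm_top.1 ?_, ?_⟩
  · rw [div_le_iff₀ (by positivity)]
    nlinarith [mul_nonneg hρ (sub_nonneg.2 hn)]
  · rw [h, mul_div_assoc', mul_div_mul_left _ _ two_ne_zero, mul_div_assoc',
      le_div_iff₀ (by positivity)] at hCS
    nlinarith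
  · rintro rfl
    have := hG.nonempty
    simp only [rho]
    rw [sum_inv_lapMatrix_eigenvalues_top, Fintype.card_fin]
    field_simp
end

section
/- For any connected weighted graph G on n vertices whose Laplacian eigenvalues are 0 = λ_1 < λ_2 ≤ ... ≤ λ_n, and any α > 0, it holds that ∑_{i=1}^n 1/(d_i + α) ≤ 1/(nα) + ∑_{i=2}^n 1/λ_i, where d_i are the (weighted) vertex degrees. -/
open Matrix SimpleGraph Finset

/-- Weighted Laplacian of a graph with edge weights `w`. -/
noncomputable def glap {n : ℕ} (G : SimpleGraph (Fin n)) [DecidableRel G.Adj]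
    (w : Sym2 (Fin n) → ℝ) : Matrix (Fin n) (Fin n) ℝ :=
  Matrix.of fun i j =>
    if i = j then ∑ k, (if G.Adj i k then w s(i, k) else 0)
    else if G.Adj i j then -w s(i, j) else 0

lemma glap_isHermitian {n : ℕ} (G : SimpleGraph (Fin n)) [DecidableRel G.Adj]
    (w : Sym2 (Fin n) → ℝ) : (glap G w).IsHermitian := by
  rw [Matrix.IsHermitian, conjTranspose_eq_transpose_of_trivial]
  ext i j
  simp only [glap, Matrix.transpose_apply, Matrix.of_apply]
  by_cases h : i = j
  · subst h; simp
  · have h' : ¬ j = i := fun hh => h hh.symm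
    rw [if_neg h', if_neg h]
    by_cases ha : G.Adj i j
    · rw [if_pos ha, if_pos (G.adj_comm i j |>.mp ha), Sym2.eq_swap]
    · rw [if_neg ha, if_neg (fun hh => ha ((G.adj_comm i j).mpr hh))]

/-- Eigenvalues of the weighted Laplacian. -/
noncomputable def wEig {n : ℕ} (G : SimpleGraph (Fin n)) [DecidableRel G.Adj]
    (w : Sym2 (Fin n) → ℝ) : Fin n → ℝ :=
  (glap_isHermitian G w).eigenvalues

/-- Performance measure of a weighted graph. -/
noncomputable def wRho {n : ℕ} (G : SimpleGraph (Fin n)) [DecidableRel G.Adj]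
    (w : Sym2 (Fin n) → ℝ) : ℝ :=
  (1/2) * ∑ i, (wEig G w i)⁻¹

/-!
Let `(λ_k, v_k)` be an orthonormal eigenbasis of `L = glap G w`. For a connected graph the kernel
of `L` consists of the constant vectors, so exactly one eigenvalue vanishes, say `λ_{k₀}`, and
`v_{k₀}(i)² = 1/n` for all `i`. Replacing `λ_{k₀}` by `nα` gives `μ_k > 0` with
`d_i + α = ∑_k v_k(i)² μ_k`, the diagonal of the spectral decomposition of `L + αJ`. The weights
`v_k(i)²` form a doubly stochastic matrix, so Jensen's inequality for `x ↦ 1/x` in each row,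
summed over the rows, gives `∑_i 1/(d_i + α) ≤ ∑_k 1/μ_k = 1/(nα) + ∑_{k ≠ k₀} 1/λ_k`, and the
last sum is `∑_k (λ_k)⁻¹` because `0⁻¹ = 0`.
-/

theorem EuclideanSpace.sq_apply_eq_inv_card_of_norm_eq_one {ι : Type*} [Fintype ι]
    {x : EuclideanSpace ℝ ι} (hx : ‖x‖ = 1) (hc : ∀ i j, x i = x j) (i : ι) :
    x i ^ 2 = (Fintype.card ι : ℝ)⁻¹ := by
  have h := x.real_norm_sq_eq
  simp_rw [hx, hc _ i, sum_const, card_univ, nsmul_eq_mul, one_pow] at h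
  have hcard : (Fintype.card ι : ℝ) ≠ 0 := by rintro h0; simp [h0] at h
  field_simp
  linarith

theorem Orthonormal.eq_of_apply_const {ι κ : Type*} [Fintype ι] {v : κ → EuclideanSpace ℝ ι}
    (hv : Orthonormal ℝ v) {k l : κ} (hk : ∀ i j, v k i = v k j) (hl : ∀ i j, v l i = v l j) :
    k = l := by
  by_contra hkl
  have hinner : ∑ i, v l i * v k i = 0 := by
    simpa [PiLp.inner_apply] using hv.2 hkl
  obtain ⟨i⟩ : Nonempty ι := by
    by_contra h
    rw [not_nonempty_iff] at h
    simpa [Subsingleton.elim (v k) 0] using hv.1 k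
  have hsq (m : κ) (hm : ∀ i j, v m i = v m j) :=
    EuclideanSpace.sq_apply_eq_inv_card_of_norm_eq_one (hv.1 m) hm i
  simp_rw [hl _ i, hk _ i, sum_const, card_univ, nsmul_eq_mul] at hinner
  have hcard : (Fintype.card ι : ℝ) ≠ 0 := by exact_mod_cast (Fintype.card_pos_iff.mpr ⟨i⟩).ne'
  have := congrArg (· ^ 2) ((mul_eq_zero.mp hinner).resolve_left hcard)
  simp only [mul_pow, hsq k hk, hsq l hl] at this
  simp [hcard] at this

namespace OrthonormalBasis

variable {ι κ : Type*} [Fintype ι] [Fintype κ] (b : OrthonormalBasis κ ℝ (EuclideanSpace ℝ ι))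

theorem sum_sq_apply_left (k : κ) : ∑ i, b k i ^ 2 = 1 := by
  rw [← EuclideanSpace.real_norm_sq_eq, b.orthonormal.1 k, one_pow]

theorem sum_sq_apply_right [DecidableEq ι] (i : ι) : ∑ k, b k i ^ 2 = 1 := by
  have h := b.sum_inner_mul_inner (EuclideanSpace.single i (1 : ℝ)) (EuclideanSpace.single i 1)
  simp only [EuclideanSpace.inner_single_left, EuclideanSpace.inner_single_right] at h
  simpa [sq] using h

theorem sum_inv_sum_sq_mul_le {μ : κ → ℝ} (hμ : ∀ k, 0 < μ k) :
    ∑ i, (∑ k, b k i ^ 2 * μ k)⁻¹ ≤ ∑ k, (μ k)⁻¹ := by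
  classical
  have jensen (i : ι) : (∑ k, b k i ^ 2 * μ k)⁻¹ ≤ ∑ k, b k i ^ 2 * (μ k)⁻¹ := by
    simpa only [smul_eq_mul, _root_.zpow_neg_one] using (convexOn_zpow (-1)).map_sum_le
      (fun k _ => sq_nonneg (b k i)) (b.sum_sq_apply_right i) (fun k _ => hμ k)
  calc ∑ i, (∑ k, b k i ^ 2 * μ k)⁻¹ ≤ ∑ i, ∑ k, b k i ^ 2 * (μ k)⁻¹ :=
        sum_le_sum fun i _ => jensen i
    _ = ∑ k, (μ k)⁻¹ := by
      rw [sum_comm]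
      simp_rw [← sum_mul, sum_sq_apply_left, one_mul]

end OrthonormalBasis

theorem Fintype.sum_inv_update_of_eq_zero {ι : Type*} [Fintype ι] [DecidableEq ι] {f : ι → ℝ}
    {k : ι} (hk : f k = 0) (c : ℝ) :
    ∑ i, (Function.update f k c i)⁻¹ = c⁻¹ + ∑ i, (f i)⁻¹ := by
  rw [← sum_erase univ (f := fun i => (f i)⁻¹) (a := k) (by simp [hk]), ← sdiff_singleton_eq_erase,
    ← sum_update_of_mem (mem_univ k)]
  exact Finset.sum_congr rfl fun i _ => Function.apply_update (fun _ => Inv.inv) f k c i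

namespace Matrix.IsHermitian

variable {ι : Type*} [Fintype ι] [DecidableEq ι] {M : Matrix ι ι ℝ} (hM : M.IsHermitian)

theorem apply_self_eq_sum (i : ι) :
    M i i = ∑ k, hM.eigenvectorBasis k i ^ 2 * hM.eigenvalues k := by
  conv_lhs => rw [hM.spectral_theorem]
  simp [Matrix.mul_apply, diagonal_apply, eigenvectorUnitary_apply, sq, mul_comm, mul_left_comm]

theorem apply_self_add_sq_mul_eq_sum_update (i k₀ : ι) (c : ℝ) :
    M i i + hM.eigenvectorBasis k₀ i ^ 2 * c =
      ∑ k, hM.eigenvectorBasis k i ^ 2 *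
        Function.update hM.eigenvalues k₀ (hM.eigenvalues k₀ + c) k := by
  have hterm (k : ι) : hM.eigenvectorBasis k i ^ 2 *
        Function.update hM.eigenvalues k₀ (hM.eigenvalues k₀ + c) k =
      hM.eigenvectorBasis k i ^ 2 * hM.eigenvalues k +
        if k = k₀ then hM.eigenvectorBasis k₀ i ^ 2 * c else 0 := by
    rw [Function.update_apply]
    split_ifs with h
    · subst h; ring
    · ring
  simp_rw [hterm, sum_add_distrib, sum_ite_eq', mem_univ, if_true, ← apply_self_eq_sum]

theorem exists_eigenvalues_eq_zero {x : ι → ℝ} (hx0 : x ≠ 0) (hx : M *ᵥ x = 0) :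
    ∃ k, hM.eigenvalues k = 0 := by
  have hdet : M.det = 0 := exists_mulVec_eq_zero_iff.mp ⟨x, hx0, hx⟩
  simpa [hM.det_eq_prod_eigenvalues, prod_eq_zero_iff] using hdet

end Matrix.IsHermitian

theorem Matrix.PosSemidef.exists_eigenvalues_eq_zero_of_mulVec_eq_zero_iff {ι : Type*} [Fintype ι]
    [DecidableEq ι] [Nonempty ι] {M : Matrix ι ι ℝ} (hM : M.PosSemidef)
    (hker : ∀ x, M *ᵥ x = 0 ↔ ∀ i j, x i = x j) :
    ∃ k₀, hM.isHermitian.eigenvalues k₀ = 0 ∧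
      (∀ i, hM.isHermitian.eigenvectorBasis k₀ i ^ 2 = (Fintype.card ι : ℝ)⁻¹) ∧
      ∀ k ≠ k₀, 0 < hM.isHermitian.eigenvalues k := by
  have hconst (k : ι) (hk : hM.isHermitian.eigenvalues k = 0) :
      ∀ i j, hM.isHermitian.eigenvectorBasis k i = hM.isHermitian.eigenvectorBasis k j :=
    (hker _).mp (by rw [hM.isHermitian.mulVec_eigenvectorBasis, hk, zero_smul])
  obtain ⟨k₀, hk₀⟩ := hM.isHermitian.exists_eigenvalues_eq_zero one_ne_zero ((hker 1).mpr fun _ _ => rfl)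
  refine ⟨k₀, hk₀, EuclideanSpace.sq_apply_eq_inv_card_of_norm_eq_one
    (hM.isHermitian.eigenvectorBasis.orthonormal.1 k₀) (hconst k₀ hk₀), fun k hk => ?_⟩
  exact (hM.eigenvalues_nonneg k).lt_of_ne fun h =>
    hk (hM.isHermitian.eigenvectorBasis.orthonormal.eq_of_apply_const (hconst k h.symm) (hconst k₀ hk₀))

section WeightedLaplacian
variable {n : ℕ} (G : SimpleGraph (Fin n)) [DecidableRel G.Adj] (w : Sym2 (Fin n) → ℝ)

noncomputable def wAdj : Matrix (Fin n) (Fin n) ℝ :=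
  of fun i j => if G.Adj i j then w s(i, j) else 0

theorem wAdj_comm (i j : Fin n) : wAdj G w i j = wAdj G w j i := by
  simp only [wAdj, of_apply, G.adj_comm i j, Sym2.eq_swap]

variable {G w}

theorem wAdj_nonneg (hw : ∀ e ∈ G.edgeSet, 0 < w e) (i j : Fin n) : 0 ≤ wAdj G w i j := by
  simp only [wAdj, of_apply]
  split_ifs with h
  · exact (hw _ h).le
  · exact le_rfl

variable (G w)

theorem glap_eq_diagonal_sub_wAdj :
    glap G w = diagonal (fun i => ∑ j, wAdj G w i j) - wAdj G w := by
  ext i j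
  by_cases h : i = j
  · subst h; simp [glap, wAdj]
  · simp only [glap, wAdj, of_apply, Matrix.sub_apply, diagonal_apply_ne _ h, if_neg h, zero_sub]
    split_ifs <;> simp

theorem glap_mulVec_apply (x : Fin n → ℝ) (i : Fin n) :
    (glap G w *ᵥ x) i = ∑ j, wAdj G w i j * (x i - x j) := by
  rw [glap_eq_diagonal_sub_wAdj, sub_mulVec, Pi.sub_apply, mulVec_diagonal]
  simp only [mulVec, dotProduct, mul_sub, sum_sub_distrib, sum_mul]

theorem two_mul_dotProduct_glap_mulVec (x : Fin n → ℝ) :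
    2 * (x ⬝ᵥ glap G w *ᵥ x) = ∑ i, ∑ j, wAdj G w i j * (x i - x j) ^ 2 := by
  have hform : x ⬝ᵥ glap G w *ᵥ x = ∑ i, ∑ j, wAdj G w i j * (x i * (x i - x j)) := by
    simp only [dotProduct, glap_mulVec_apply, mul_sum, mul_left_comm (x _)]
  have hswap : ∑ i, ∑ j, wAdj G w i j * (x i * (x i - x j)) =
      ∑ i, ∑ j, wAdj G w i j * (x j * (x j - x i)) := by
    rw [sum_comm]
    simp_rw [wAdj_comm G w]
  rw [two_mul, hform]
  nth_rewrite 2 [hswap]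
  simp only [← sum_add_distrib]
  exact sum_congr rfl fun i _ => sum_congr rfl fun j _ => by ring

variable {G w}

theorem glap_posSemidef (hw : ∀ e ∈ G.edgeSet, 0 < w e) : (glap G w).PosSemidef := by
  refine .of_dotProduct_mulVec_nonneg (glap_isHermitian G w) fun x => ?_
  have hsum : 0 ≤ ∑ i, ∑ j, wAdj G w i j * (x i - x j) ^ 2 :=
    sum_nonneg fun i _ => sum_nonneg fun j _ => mul_nonneg (wAdj_nonneg hw i j) (sq_nonneg _)
  rw [star_trivial]
  linarith [two_mul_dotProduct_glap_mulVec G w x]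

theorem glap_mulVec_eq_zero_iff (hw : ∀ e ∈ G.edgeSet, 0 < w e) (hG : G.Connected)
    {x : Fin n → ℝ} : glap G w *ᵥ x = 0 ↔ ∀ i j, x i = x j := by
  refine ⟨fun hx => ?_, fun hx => funext fun i => by simp [glap_mulVec_apply, hx _ i]⟩
  have hterm_nonneg (i j : Fin n) : 0 ≤ wAdj G w i j * (x i - x j) ^ 2 :=
    mul_nonneg (wAdj_nonneg hw i j) (sq_nonneg _)
  have hterm_zero (i j : Fin n) : wAdj G w i j * (x i - x j) ^ 2 = 0 := by
    have hsum : ∑ i, ∑ j, wAdj G w i j * (x i - x j) ^ 2 = 0 := by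
      rw [← two_mul_dotProduct_glap_mulVec, hx, dotProduct_zero, mul_zero]
    have hrow := congrFun ((Fintype.sum_eq_zero_iff_of_nonneg fun i =>
      sum_nonneg fun j _ => hterm_nonneg i j).mp hsum) i
    exact congrFun ((Fintype.sum_eq_zero_iff_of_nonneg (hterm_nonneg i)).mp hrow) j
  have hadj (i j : Fin n) (hij : G.Adj i j) : x i = x j := by
    have hpos : 0 < wAdj G w i j := by simpa [wAdj, hij] using hw _ hij
    simpa [hpos.ne', sub_eq_zero] using hterm_zero i j
  intro i j
  obtain ⟨p⟩ := hG.preconnected i j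
  induction p with
  | nil => rfl
  | cons h _ ih => exact (hadj _ _ h).trans ih

end WeightedLaplacian

/-- Schur–Horn bound: `∑ 1/(d_i + α) ≤ 1/(nα) + ∑_{i≥2} 1/λ_i` for any `α > 0`,
where `d_i = (L_G)_{ii}` are the weighted degrees. -/
theorem stmt8 {n : ℕ} (G : SimpleGraph (Fin n)) [DecidableRel G.Adj]
    (w : Sym2 (Fin n) → ℝ) (hw : ∀ e ∈ G.edgeSet, 0 < w e) (hG : G.Connected)
    (α : ℝ) (hα : 0 < α) :
    ∑ i, (glap G w i i + α)⁻¹ ≤ ((n : ℝ) * α)⁻¹ + ∑ i, (wEig G w i)⁻¹ := by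
  have : Nonempty (Fin n) := hG.nonempty
  have hn : (0 : ℝ) < n := Nat.cast_pos.mpr Fin.size_positive'
  have hL := glap_posSemidef hw
  obtain ⟨k₀, heig₀, hv₀, heig_pos⟩ :=
    hL.exists_eigenvalues_eq_zero_of_mulVec_eq_zero_iff fun _ => glap_mulVec_eq_zero_iff hw hG
  set μ := Function.update (wEig G w) k₀ (n * α)
  have hμ (k : Fin n) : 0 < μ k := by
    rcases eq_or_ne k k₀ with rfl | hk
    · simp only [μ, Function.update_self]; positivity
    · rw [show μ k = wEig G w k from Function.update_of_ne hk _ _]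
      exact heig_pos k hk
  have hdiag (i : Fin n) : glap G w i i + α = ∑ k, hL.isHermitian.eigenvectorBasis k i ^ 2 * μ k := by
    have := hL.isHermitian.apply_self_add_sq_mul_eq_sum_update i k₀ (n * α)
    rwa [hv₀, heig₀, zero_add, Fintype.card_fin, inv_mul_cancel_left₀ hn.ne'] at this
  calc ∑ i, (glap G w i i + α)⁻¹ = ∑ i, (∑ k, hL.isHermitian.eigenvectorBasis k i ^ 2 * μ k)⁻¹ := by
        simp_rw [hdiag]
    _ ≤ ∑ k, (μ k)⁻¹ := hL.isHermitian.eigenvectorBasis.sum_inv_sum_sq_mul_le hμ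
    _ = ((n : ℝ) * α)⁻¹ + ∑ i, (wEig G w i)⁻¹ := Fintype.sum_inv_update_of_eq_zero heig₀ _
end

section
/- For a connected unweighted graph G on n ≥ 3 vertices, ρ_ss(G) · σ(G) ≥ (n-1)/2, where σ(G) = max over distinct vertex pairs {i,j} of (d_i + d_j - |N(i) ∩ N(j)|), with equality when G = K_n. -/
/-!
Let `x` be a Laplacian eigenvector with eigenvalue `μ ≠ 0`. Then `x` is not constant; comparing
the eigen-equations at a maximum `i` and a minimum `j` of `x` gives
`μ (x_i - x_j) = ∑_{u ∈ N(i)} (x_i - x_u) + ∑_{u ∈ N(j)} (x_u - x_j)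
  ≤ (d_i + d_j - |N(i) ∩ N(j)|) (x_i - x_j)`,
so every nonzero eigenvalue is at most `σ(G)`. A connected graph has exactly `n - 1` nonzero
eigenvalues, each contributing at least `1 / σ(G)` to `2 ρ_ss(G)`. For `K_n` all of them equal
`n = σ(K_n)`.
-/

open Matrix SimpleGraph Finset

/-- `σ(G) = max_{i ≠ j} (d_i + d_j - |N(i) ∩ N(j)|)`. -/
noncomputable def sigmaG {n : ℕ} (G : SimpleGraph (Fin n)) [DecidableRel G.Adj] : ℝ :=
  sSup {x : ℝ | ∃ i j : Fin n, i ≠ j ∧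
    x = (G.degree i : ℝ) + (G.degree j : ℝ)
        - ((G.neighborFinset i ∩ G.neighborFinset j).card : ℝ)}

theorem card_ne_zero_le_sum_inv_mul {ι : Type*} [Fintype ι] {f : ι → ℝ} {s : ℝ}
    (hf : ∀ i, 0 ≤ f i) (hs : ∀ i, f i ≠ 0 → f i ≤ s) :
    (Fintype.card {i // f i ≠ 0} : ℝ) ≤ (∑ i, (f i)⁻¹) * s := by
  rw [Fintype.card_subtype, natCast_card_filter, sum_mul]
  refine sum_le_sum fun i _ => ?_
  by_cases hi : f i = 0
  · simp [hi]
  · rw [if_pos hi, inv_mul_eq_div, one_le_div₀ ((hf i).lt_of_ne' hi)]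
    exact hs i hi

theorem sum_inv_mul_eq_card_ne_zero {ι : Type*} [Fintype ι] {f : ι → ℝ} {s : ℝ}
    (hs : ∀ i, f i ≠ 0 → f i = s) :
    (∑ i, (f i)⁻¹) * s = Fintype.card {i // f i ≠ 0} := by
  rw [Fintype.card_subtype, natCast_card_filter, sum_mul]
  refine sum_congr rfl fun i _ => ?_
  by_cases hi : f i = 0
  · simp [hi]
  · rw [if_pos hi, ← hs i hi, inv_mul_cancel₀ hi]

namespace SimpleGraph

variable {V : Type*}

theorem Connected.card_connectedComponent {G : SimpleGraph V} [Fintype G.ConnectedComponent]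
    (hG : G.Connected) :
    Fintype.card G.ConnectedComponent = 1 :=
  have := hG.preconnected.subsingleton_connectedComponent
  Fintype.card_eq_one_iff.2
    ⟨G.connectedComponentMk hG.nonempty.some, fun _ => Subsingleton.elim _ _⟩

variable [Fintype V] [DecidableEq V]

noncomputable def pairBound (G : SimpleGraph V) [DecidableRel G.Adj] (i j : V) : ℝ :=
  G.degree i + G.degree j - #(G.neighborFinset i ∩ G.neighborFinset j)

theorem pairBound_eq_card_union (G : SimpleGraph V) [DecidableRel G.Adj] (i j : V) :
    G.pairBound i j = #(G.neighborFinset i ∪ G.neighborFinset j) := by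
  rw [pairBound, sub_eq_iff_eq_add, ← card_neighborFinset_eq_degree,
    ← card_neighborFinset_eq_degree]
  exact_mod_cast (card_union_add_card_inter _ _).symm

theorem lapMatrix_mulVec_apply_sub (G : SimpleGraph V) [DecidableRel G.Adj] (x : V → ℝ)
    (i j : V) :
    (G.lapMatrix ℝ *ᵥ x) i - (G.lapMatrix ℝ *ᵥ x) j =
      ∑ u ∈ G.neighborFinset i, (x i - x u) + ∑ u ∈ G.neighborFinset j, (x u - x j) := by
  simp only [lapMatrix_mulVec_apply, sum_sub_distrib, sum_const, card_neighborFinset_eq_degree,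
    nsmul_eq_mul]
  ring

/-- On a common neighbour the two gaps add up to exactly `x i - x j`; every other gap is at
most `x i - x j`. -/
theorem sum_neighbor_gaps_le (G : SimpleGraph V) [DecidableRel G.Adj] {x : V → ℝ} {i j : V}
    (hi : ∀ u, x u ≤ x i) (hj : ∀ u, x j ≤ x u) :
    ∑ u ∈ G.neighborFinset i, (x i - x u) + ∑ u ∈ G.neighborFinset j, (x u - x j) ≤
      G.pairBound i j * (x i - x j) := by
  set Ni := G.neighborFinset i
  set Nj := G.neighborFinset j
  have common : ∑ u ∈ Ni ∩ Nj, (x i - x u) + ∑ u ∈ Ni ∩ Nj, (x u - x j) =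
      #(Ni ∩ Nj) * (x i - x j) := by
    simp only [← sum_add_distrib, sub_add_sub_cancel, sum_const, nsmul_eq_mul]
  have only_i : ∑ u ∈ Ni \ Nj, (x i - x u) ≤ #(Ni \ Nj) * (x i - x j) := by
    simpa using sum_le_card_nsmul (Ni \ Nj) _ _ fun u _ => sub_le_sub_left (hj u) (x i)
  have only_j : ∑ u ∈ Nj \ Ni, (x u - x j) ≤ #(Nj \ Ni) * (x i - x j) := by
    simpa using sum_le_card_nsmul (Nj \ Ni) _ _ fun u _ => sub_le_sub_right (hi u) (x j)
  have card_i : (#(Ni \ Nj) : ℝ) + #(Ni ∩ Nj) = G.degree i := by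
    rw [← Nat.cast_add, card_sdiff_add_card_inter, card_neighborFinset_eq_degree]
  have card_j : (#(Nj \ Ni) : ℝ) + #(Ni ∩ Nj) = G.degree j := by
    rw [inter_comm, ← Nat.cast_add, card_sdiff_add_card_inter, card_neighborFinset_eq_degree]
  rw [← sum_inter_add_sum_sdiff Ni Nj, ← sum_inter_add_sum_sdiff Nj Ni, inter_comm Nj Ni,
    pairBound, ← card_i, ← card_j]
  linarith

theorem exists_le_pairBound_of_lapMatrix_mulVec_eq_smul (G : SimpleGraph V)
    [DecidableRel G.Adj] {μ : ℝ} {x : V → ℝ} (hx : x ≠ 0) (hμ : μ ≠ 0)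
    (hL : G.lapMatrix ℝ *ᵥ x = μ • x) : ∃ i j, i ≠ j ∧ μ ≤ G.pairBound i j := by
  have : Nonempty V := (Function.ne_iff.1 hx).nonempty
  obtain ⟨i, hi⟩ := Finite.exists_max x
  obtain ⟨j, hj⟩ := Finite.exists_min x
  have hgap : x j < x i := by
    by_contra! hle
    have hconst : ∀ u v, x u = x v := fun u v =>
      (le_antisymm (hi u) (hle.trans (hj u))).trans (le_antisymm (hi v) (hle.trans (hj v))).symm
    have hLx : G.lapMatrix ℝ *ᵥ x = 0 :=
      (lapMatrix_mulVec_eq_zero_iff_forall_adj G).2 fun u v _ => hconst u v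
    exact hx ((smul_eq_zero.1 (hL.symm.trans hLx)).resolve_left hμ)
  refine ⟨i, j, ne_of_apply_ne x hgap.ne', le_of_mul_le_mul_right ?_ (sub_pos.2 hgap)⟩
  calc μ * (x i - x j) = (G.lapMatrix ℝ *ᵥ x) i - (G.lapMatrix ℝ *ᵥ x) j := by
        simp [hL, mul_sub]
    _ = ∑ u ∈ G.neighborFinset i, (x i - x u) + ∑ u ∈ G.neighborFinset j, (x u - x j) :=
        G.lapMatrix_mulVec_apply_sub x i j
    _ ≤ G.pairBound i j * (x i - x j) := G.sum_neighbor_gaps_le hi hj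

theorem lapMatrix_rank_add_card_connectedComponent (G : SimpleGraph V) [DecidableRel G.Adj] :
    (G.lapMatrix ℝ).rank + Fintype.card G.ConnectedComponent = Fintype.card V := by
  rw [card_connectedComponent_eq_finrank_ker_toLin'_lapMatrix, Matrix.rank, ← toLin'_apply',
    LinearMap.finrank_range_add_finrank_ker, Module.finrank_fintype_fun_eq_card]

theorem Connected.card_lapMatrix_eigenvalues_ne_zero_s14 {G : SimpleGraph V} [DecidableRel G.Adj]
    (hG : G.Connected) :
    Fintype.card {k // (G.posSemidef_lapMatrix ℝ).1.eigenvalues k ≠ 0} =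
      Fintype.card V - 1 := by
  have := G.lapMatrix_rank_add_card_connectedComponent
  rw [hG.card_connectedComponent] at this
  rw [← (G.posSemidef_lapMatrix ℝ).1.rank_eq_card_non_zero_eigs]
  omega

/-- `neighborFinset_top`, for an arbitrary `DecidableRel` instance on `⊤`. -/
theorem neighborFinset_top_eq_compl [DecidableRel (⊤ : SimpleGraph V).Adj] (v : V) :
    (⊤ : SimpleGraph V).neighborFinset v = {v}ᶜ := by
  ext
  simp [ne_comm]

theorem lapMatrix_top_mulVec_apply [DecidableRel (⊤ : SimpleGraph V).Adj] (x : V → ℝ)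
    (k : V) :
    ((⊤ : SimpleGraph V).lapMatrix ℝ *ᵥ x) k = Fintype.card V * x k - ∑ u, x u := by
  rw [lapMatrix_mulVec_apply, ← card_neighborFinset_eq_degree, neighborFinset_top_eq_compl]
  have hsum := sum_compl_add_sum {k} x
  have hcard := card_compl_add_card ({k} : Finset V)
  rw [sum_singleton] at hsum
  rw [card_singleton] at hcard
  rw [← hsum, ← hcard]
  push_cast
  ring

theorem eq_card_of_lapMatrix_top_mulVec_eq_smul [DecidableRel (⊤ : SimpleGraph V).Adj]
    {μ : ℝ} {x : V → ℝ} (hx : x ≠ 0) (hμ : μ ≠ 0)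
    (hL : (⊤ : SimpleGraph V).lapMatrix ℝ *ᵥ x = μ • x) : μ = Fintype.card V := by
  have hk : ∀ k, μ * x k = Fintype.card V * x k - ∑ u, x u := fun k => by
    rw [← lapMatrix_top_mulVec_apply, hL, Pi.smul_apply, smul_eq_mul]
  have hsum : ∑ u, x u = 0 := by
    have : μ * ∑ u, x u = 0 := by
      rw [mul_sum, sum_congr rfl fun k _ => hk k, sum_sub_distrib, ← mul_sum, sum_const,
        card_univ, nsmul_eq_mul, sub_self]
    exact (mul_eq_zero.1 this).resolve_left hμ
  obtain ⟨k, hxk⟩ := Function.ne_iff.1 hx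
  have := hk k
  rw [hsum, sub_zero] at this
  exact mul_right_cancel₀ hxk this

theorem pairBound_top [DecidableRel (⊤ : SimpleGraph V).Adj] {i j : V} (h : i ≠ j) :
    (⊤ : SimpleGraph V).pairBound i j = Fintype.card V := by
  rw [pairBound_eq_card_union, neighborFinset_top_eq_compl, neighborFinset_top_eq_compl,
    ← compl_inter, disjoint_iff_inter_eq_empty.1 (disjoint_singleton.2 h), compl_empty, card_univ]

end SimpleGraph

theorem pairBound_le_sigmaG {n : ℕ} (G : SimpleGraph (Fin n)) [DecidableRel G.Adj] {i j : Fin n}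
    (h : i ≠ j) : G.pairBound i j ≤ sigmaG G := by
  refine le_csSup
    ((Set.finite_range fun p : Fin n × Fin n => G.pairBound p.1 p.2).subset ?_).bddAbove
    ⟨i, j, h, rfl⟩
  rintro _ ⟨a, b, -, rfl⟩
  exact ⟨(a, b), rfl⟩

theorem lapMatrix_eigenvalue_le_sigmaG {n : ℕ} (G : SimpleGraph (Fin n)) [DecidableRel G.Adj]
    {k : Fin n} (hk : (G.posSemidef_lapMatrix ℝ).1.eigenvalues k ≠ 0) :
    (G.posSemidef_lapMatrix ℝ).1.eigenvalues k ≤ sigmaG G := by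
  have hx := (G.posSemidef_lapMatrix ℝ).1.eigenvectorBasis.orthonormal.ne_zero k
  obtain ⟨i, j, hij, hle⟩ := G.exists_le_pairBound_of_lapMatrix_mulVec_eq_smul
    (by simpa using hx) hk ((G.posSemidef_lapMatrix ℝ).1.mulVec_eigenvectorBasis k)
  exact hle.trans (pairBound_le_sigmaG G hij)

theorem sigmaG_top {n : ℕ} [DecidableRel (⊤ : SimpleGraph (Fin n)).Adj] (hn : 1 < n) :
    sigmaG (⊤ : SimpleGraph (Fin n)) = n := by
  have h01 : (⟨0, by omega⟩ : Fin n) ≠ ⟨1, hn⟩ := by simp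
  have hpair {i j : Fin n} (h : i ≠ j) : (⊤ : SimpleGraph (Fin n)).pairBound i j = n := by
    rw [pairBound_top h, Fintype.card_fin]
  refine le_antisymm (csSup_le ⟨_, _, _, h01, rfl⟩ ?_) ?_
  · rintro _ ⟨i, j, hij, rfl⟩
    exact (hpair hij).le
  · exact hpair h01 ▸ pairBound_le_sigmaG ⊤ h01

theorem lapMatrix_top_eigenvalue_eq {n : ℕ} [DecidableRel (⊤ : SimpleGraph (Fin n)).Adj]
    {k : Fin n}
    (hk : ((⊤ : SimpleGraph (Fin n)).posSemidef_lapMatrix ℝ).1.eigenvalues k ≠ 0) :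
    ((⊤ : SimpleGraph (Fin n)).posSemidef_lapMatrix ℝ).1.eigenvalues k = n := by
  have hx :=
    ((⊤ : SimpleGraph (Fin n)).posSemidef_lapMatrix ℝ).1.eigenvectorBasis.orthonormal.ne_zero k
  simpa using eq_card_of_lapMatrix_top_mulVec_eq_smul (by simpa using hx) hk
    (((⊤ : SimpleGraph (Fin n)).posSemidef_lapMatrix ℝ).1.mulVec_eigenvectorBasis k)

/-- Tradeoff `ρ_ss(G) σ(G) ≥ (n-1)/2`, with equality when `G = K_n`. -/
theorem stmt14 {n : ℕ} (hn : 3 ≤ n) (G : SimpleGraph (Fin n)) [DecidableRel G.Adj]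
    (hG : G.Connected) :
    rho G * sigmaG G ≥ ((n : ℝ) - 1) / 2 ∧
    (G = ⊤ → rho G * sigmaG G = ((n : ℝ) - 1) / 2) := by
  have hcard :
      (Fintype.card {k // (G.posSemidef_lapMatrix ℝ).1.eigenvalues k ≠ 0} : ℝ) = n - 1 := by
    rw [hG.card_lapMatrix_eigenvalues_ne_zero_s14, Fintype.card_fin, Nat.cast_pred (by omega)]
  have hrho : rho G * sigmaG G =
      1 / 2 * ((∑ k, ((G.posSemidef_lapMatrix ℝ).1.eigenvalues k)⁻¹) * sigmaG G) := by
    rw [rho, mul_assoc]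
  refine ⟨?_, ?_⟩
  · rw [ge_iff_le, hrho, ← hcard]
    linarith [card_ne_zero_le_sum_inv_mul (G.posSemidef_lapMatrix ℝ).eigenvalues_nonneg
      fun _ => lapMatrix_eigenvalue_le_sigmaG G]
  · rintro rfl
    rw [hrho, ← hcard, sigmaG_top (by omega),
      sum_inv_mul_eq_card_ne_zero fun _ => lapMatrix_top_eigenvalue_eq]
    ring
end
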